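/- Let (μ_k) and μ be Borel probability measures with finite first moment supported in ℝ^{m+1}₊, with V_{m+1}(P(μ)) ≠ 0 and V_{m+1}(P(μ_k)) ≠ 0 for all k. If μ_k converges weakly to μ and m(μ_k) → m(μ), then the generalized Gini indices G(Z(μ_k)) = V_{m+1}(Z(μ_k))/V_{m+1}(P(μ_k)) converge to G(Z(μ)). -/

import Mathlib

open MeasureTheory Pointwise Filter Topology

/-- The zonoid of a Borel measure. -/
noncomputable def zonoid {n : ℕ} (μ : Measure (EuclideanSpace ℝ (Fin n))) :
    Set (EuclideanSpace ℝ (Fin n)) :=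
  {z | ∃ φ : EuclideanSpace ℝ (Fin n) → ℝ, Measurable φ ∧
    (∀ x, φ x ∈ Set.Icc (0 : ℝ) 1) ∧ z = ∫ x, φ x • x ∂μ}

/-- The non-negative octant. -/
def octant (n : ℕ) : Set (EuclideanSpace ℝ (Fin n)) := {x | ∀ i, 0 ≤ x i}

/-- The box (parallelotope) with opposite vertices `0` and `v`. -/
def parbox {n : ℕ} (v : EuclideanSpace ℝ (Fin n)) : Set (EuclideanSpace ℝ (Fin n)) :=
  {z | ∀ j, 0 ≤ z j ∧ z j ≤ v j}

/-!
The closure of `Z(ν)` is the convex body whose support function is `h_ν(u) = ∫ ⟨u, x⟩⁺ dν`, and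
it has the volume of `Z(ν)` because the boundary of a convex set is Lebesgue-null. For measures on
the positive orthant the norm is dominated by the linear functional `x ↦ ∑ xᵢ`, so weak
convergence together with `m(μ_k) → m(μ)` makes the first moments uniformly integrable and gives
`h_{μ_k} → h_μ` pointwise; as these functions are positively homogeneous and uniformly Lipschitz,
`|h_{μ_k} - h_μ| ≤ ε ‖·‖` eventually. Such closeness of support functions squeezes `Z(μ_k)`
between a small closed thickening of `Z(μ)` and a copy of `Z(μ)` shrunk by a homothety towards an
interior point (when there is one; otherwise `Z(μ)` is null and the thickening suffices), so the
volumes converge. Finally `V(P(ν)) = ∏ m(ν)ᵢ` is continuous in `m(ν)` and nonzero at the limit.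
-/

open scoped NNReal RealInnerProductSpace

lemma abs_truncate_le {a M : ℝ} (hM : 0 ≤ M) : |max (-M) (min a M)| ≤ M :=
  abs_le.2 ⟨le_max_left _ _, max_le (by linarith) (min_le_right _ _)⟩

lemma abs_sub_truncate_le {a b M : ℝ} (hM : 0 ≤ M) (hab : |a| ≤ b) :
    |a - max (-M) (min a M)| ≤ b - max (-M) (min b M) := by
  obtain ⟨h₁, h₂⟩ := abs_le.1 hab
  simp only [max_def, min_def]
  split_ifs <;> rw [abs_le] <;> constructor <;> linarith

section WeakConvergence

variable {X ι : Type*} [TopologicalSpace X] [MeasurableSpace X] [OpensMeasurableSpace X]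

lemma integrable_truncate (ρ : Measure X) [IsFiniteMeasure ρ] {φ : X → ℝ} (hφ : Continuous φ)
    {M : ℝ} (hM : 0 ≤ M) : Integrable (fun x => max (-M) (min (φ x) M)) ρ :=
  (integrable_const M).mono' (by fun_prop) (.of_forall fun _ => abs_truncate_le hM)

lemma abs_integral_sub_integral_truncate_le (ρ : Measure X) [IsFiniteMeasure ρ] {f g : X → ℝ}
    (hf : Continuous f) (hg : Continuous g) (hgi : Integrable g ρ)
    (hfg : ∀ᵐ x ∂ρ, |f x| ≤ g x) {M : ℝ} (hM : 0 ≤ M) :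
    |∫ x, f x ∂ρ - ∫ x, max (-M) (min (f x) M) ∂ρ|
      ≤ ∫ x, g x ∂ρ - ∫ x, max (-M) (min (g x) M) ∂ρ := by
  have hfi : Integrable f ρ := hgi.mono' hf.aestronglyMeasurable hfg
  rw [← integral_sub hfi (integrable_truncate ρ hf hM),
    ← integral_sub hgi (integrable_truncate ρ hg hM)]
  refine abs_integral_le_integral_abs.trans
    (integral_mono_ae (hfi.sub (integrable_truncate ρ hf hM)).abs
      (hgi.sub (integrable_truncate ρ hg hM)) ?_)
  filter_upwards [hfg] with x hx using abs_sub_truncate_le hM hx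

lemma tendsto_integral_truncate_atTop (ρ : Measure X) {g : X → ℝ} (hg : Continuous g)
    (hgi : Integrable g ρ) :
    Tendsto (fun M : ℝ => ∫ x, max (-M) (min (g x) M) ∂ρ) atTop (𝓝 (∫ x, g x ∂ρ)) := by
  refine tendsto_integral_filter_of_dominated_convergence (fun x => |g x|)
    (.of_forall fun M => by fun_prop) ?_ hgi.abs (.of_forall fun x => ?_)
  · filter_upwards [eventually_ge_atTop 0] with M hM
    refine .of_forall fun x => ?_
    rw [Real.norm_eq_abs, abs_le]
    constructor <;> cases max_cases (-M) (min (g x) M) <;> cases min_cases (g x) M <;>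
      cases abs_cases (g x) <;> linarith
  · refine tendsto_const_nhds.congr' ?_
    filter_upwards [eventually_ge_atTop |g x|] with M hM
    obtain ⟨h₁, h₂⟩ := abs_le.1 hM
    rw [min_eq_left h₂, max_eq_right h₁]

theorem tendsto_integral_of_tendsto_integral_of_abs_le {l : Filter ι} {νs : ι → Measure X}
    {ν : Measure X} [IsFiniteMeasure ν] [∀ i, IsFiniteMeasure (νs i)]
    (hweak : ∀ φ : BoundedContinuousFunction X ℝ,
      Tendsto (fun i => ∫ x, φ x ∂(νs i)) l (𝓝 (∫ x, φ x ∂ν)))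
    {f g : X → ℝ} (hf : Continuous f) (hg : Continuous g)
    (hgi : ∀ i, Integrable g (νs i)) (hgν : Integrable g ν)
    (hfg : ∀ i, ∀ᵐ x ∂(νs i), |f x| ≤ g x) (hfgν : ∀ᵐ x ∂ν, |f x| ≤ g x)
    (hlim : Tendsto (fun i => ∫ x, g x ∂(νs i)) l (𝓝 (∫ x, g x ∂ν))) :
    Tendsto (fun i => ∫ x, f x ∂(νs i)) l (𝓝 (∫ x, f x ∂ν)) := by
  have htrunc : ∀ {φ : X → ℝ}, Continuous φ → ∀ {M : ℝ}, 0 ≤ M →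
      Tendsto (fun i => ∫ x, max (-M) (min (φ x) M) ∂(νs i)) l
        (𝓝 (∫ x, max (-M) (min (φ x) M) ∂ν)) := fun {φ} hφ {M} hM =>
    hweak (.ofNormedAddCommGroup (fun x => max (-M) (min (φ x) M)) (by fun_prop) M
      fun _ => abs_truncate_le hM)
  -- Truncating at level `M` moves each integral of `f` by at most the tail of `g` above `M`,
  -- which converges along `l` and is small under `ν` once `M` is large.
  rw [Metric.tendsto_nhds]
  intro ε hε
  obtain ⟨M, hMν, hM⟩ : ∃ M : ℝ,
      ∫ x, g x ∂ν - ∫ x, max (-M) (min (g x) M) ∂ν < ε / 4 ∧ 0 ≤ M :=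
    (((tendsto_integral_truncate_atTop ν hg hgν).eventually_const_lt
      (by linarith : ∫ x, g x ∂ν - ε / 4 < ∫ x, g x ∂ν)).mono fun M hM => by linarith).and
      (eventually_ge_atTop 0) |>.exists
  have htail := (hlim.sub (htrunc hg hM)).eventually_lt_const hMν
  have hmain := Metric.tendsto_nhds.1 (htrunc hf hM) (ε / 4) (by positivity)
  filter_upwards [htail, hmain] with i hi hmi
  have h₁ := abs_integral_sub_integral_truncate_le (νs i) hf hg (hgi i) (hfg i) hM
  have h₂ := abs_integral_sub_integral_truncate_le ν hf hg hgν hfgν hM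
  rw [Real.dist_eq, abs_lt] at hmi ⊢
  rw [abs_le] at h₁ h₂
  constructor <;> linarith [h₁.1, h₁.2, h₂.1, h₂.2, hmi.1, hmi.2]

end WeakConvergence

theorem eventually_forall_abs_sub_le_of_lipschitzWith {X ι : Type*} [PseudoMetricSpace X]
    {l : Filter ι} {K : Set X} (hK : IsCompact K) {F : ι → X → ℝ} {f : X → ℝ} {L : ℝ≥0}
    (hF : ∀ᶠ i in l, LipschitzWith L (F i)) (hf : LipschitzWith L f)
    (hlim : ∀ x, Tendsto (fun i => F i x) l (𝓝 (f x))) {ε : ℝ} (hε : 0 < ε) :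
    ∀ᶠ i in l, ∀ x ∈ K, |F i x - f x| ≤ ε := by
  set δ : ℝ := ε / (3 * (L + 1)) with hδ
  have hδpos : 0 < δ := by positivity
  have hLδ : L * δ ≤ ε / 3 := by
    rw [hδ, mul_div_assoc', div_le_div_iff₀ (by positivity) (by norm_num)]
    nlinarith
  obtain ⟨t, -, ht, hKt⟩ := finite_cover_balls_of_compact hK hδpos
  have hnet : ∀ᶠ i in l, ∀ y ∈ t, |F i y - f y| < ε / 3 :=
    (eventually_all_finite ht).2 fun y _ => by
      simpa only [Real.dist_eq] using Metric.tendsto_nhds.1 (hlim y) (ε / 3) (by positivity)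
  filter_upwards [hnet, hF] with i hi hFi x hx
  obtain ⟨y, hy, hxy⟩ := Set.mem_iUnion₂.1 (hKt hx)
  have hdist : L * dist x y ≤ ε / 3 :=
    (mul_le_mul_of_nonneg_left (Metric.mem_ball.1 hxy).le L.2).trans hLδ
  have h₁ := hFi.dist_le_mul x y
  have h₂ := hf.dist_le_mul y x
  rw [Real.dist_eq] at h₁ h₂
  rw [dist_comm] at h₂
  calc |F i x - f x| ≤ |F i x - F i y| + |F i y - f y| + |f y - f x| := by
        linarith [abs_sub_le (F i x) (F i y) (f x), abs_sub_le (F i y) (f y) (f x)]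
    _ ≤ ε := by linarith [hi y hy]

section WulffShape

variable {F : Type*} [NormedAddCommGroup F] [InnerProductSpace ℝ F]

def wulffShape (h : F → ℝ) : Set F := {z | ∀ u, ⟪u, z⟫ ≤ h u}

lemma wulffShape_eq_iInter (h : F → ℝ) : wulffShape h = ⋂ u, {z | ⟪u, z⟫ ≤ h u} := by
  ext z
  simp [wulffShape]

lemma isClosed_wulffShape (h : F → ℝ) : IsClosed (wulffShape h) := by
  rw [wulffShape_eq_iInter]
  exact isClosed_iInter fun u => isClosed_le (by fun_prop) continuous_const

lemma convex_wulffShape (h : F → ℝ) : Convex ℝ (wulffShape h) := by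
  rw [wulffShape_eq_iInter]
  exact convex_iInter fun u => convex_halfSpace_le (innerₛₗ ℝ u).isLinear _

lemma wulffShape_subset_closedBall {h : F → ℝ} {R : ℝ} (hR : 0 ≤ R)
    (hh : ∀ u, h u ≤ R * ‖u‖) : wulffShape h ⊆ Metric.closedBall 0 R := by
  intro z hz
  rw [mem_closedBall_zero_iff]
  have : ‖z‖ * ‖z‖ ≤ R * ‖z‖ := by
    rw [← real_inner_self_eq_norm_mul_norm]
    exact (hz z).trans (hh z)
  nlinarith [norm_nonneg z]

lemma inner_add_mul_norm_le_of_closedBall_subset {h : F → ℝ} {c : F} {r : ℝ} (hr : 0 ≤ r)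
    (hball : Metric.closedBall c r ⊆ wulffShape h) (u : F) : ⟪u, c⟫ + r * ‖u‖ ≤ h u := by
  have hmem : c + r • ‖u‖⁻¹ • u ∈ Metric.closedBall c r := by
    rw [Metric.mem_closedBall, dist_eq_norm, add_sub_cancel_left, norm_smul, norm_smul,
      Real.norm_of_nonneg hr, norm_inv, norm_norm]
    exact mul_le_of_le_one_right hr (inv_mul_le_one_of_le₀ le_rfl (norm_nonneg u))
  convert hball hmem u using 1
  rw [inner_add_right, inner_smul_right, inner_smul_right, real_inner_self_eq_norm_mul_norm,
    ← mul_assoc ‖u‖⁻¹, inv_mul_mul_self]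

lemma image_homothety_wulffShape_subset {h h' : F → ℝ} {c : F} {r t : ℝ} (hr : 0 ≤ r)
    (hball : Metric.closedBall c r ⊆ wulffShape h') (ht₀ : 0 ≤ t) (ht₁ : t ≤ 1)
    (hle : ∀ u, h' u ≤ h u + (1 - t) * r * ‖u‖) :
    AffineMap.homothety c t '' wulffShape h' ⊆ wulffShape h := by
  rintro _ ⟨z, hz, rfl⟩ u
  have hc := inner_add_mul_norm_le_of_closedBall_subset hr hball u
  have hexpand : ⟪u, AffineMap.homothety c t z⟫ = t * ⟪u, z⟫ + (1 - t) * ⟪u, c⟫ := by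
    rw [AffineMap.homothety_apply, vsub_eq_sub, vadd_eq_add, inner_add_right,
      inner_smul_right, inner_sub_right]
    ring
  rw [hexpand]
  nlinarith [mul_le_mul_of_nonneg_left (hz u) ht₀, hle u]

lemma wulffShape_subset_cthickening [CompleteSpace F] {h h' : F → ℝ}
    (hexact : ∀ u, ∃ w ∈ wulffShape h', h' u ≤ ⟪u, w⟫) {ε : ℝ} (hε : 0 ≤ ε)
    (hle : ∀ u, h u ≤ h' u + ε * ‖u‖) :
    wulffShape h ⊆ Metric.cthickening ε (wulffShape h') := by
  intro z hz
  have hne : (wulffShape h').Nonempty := let ⟨w, hw, _⟩ := hexact 0; ⟨w, hw⟩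
  -- `p` is the nearest point of `wulffShape h'`; test `z` against the direction `z - p`.
  obtain ⟨p, hp, hpmin⟩ := exists_norm_eq_iInf_of_complete_convex hne
    (isClosed_wulffShape h').isComplete (convex_wulffShape h') z
  have hvar := (norm_eq_iInf_iff_real_inner_le_zero (convex_wulffShape h') hp).1 hpmin
  obtain ⟨w, hw, hhw⟩ := hexact (z - p)
  have hsq : ‖z - p‖ * ‖z - p‖ ≤ ε * ‖z - p‖ := by
    have := hvar w hw
    rw [inner_sub_right] at this
    rw [← real_inner_self_eq_norm_mul_norm, inner_sub_right]
    linarith [hz (z - p), hle (z - p)]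
  refine Metric.mem_cthickening_of_dist_le z p ε _ hp ?_
  rw [dist_eq_norm]
  nlinarith [norm_nonneg (z - p)]

end WulffShape

section Volume

variable {F : Type*} [NormedAddCommGroup F] [InnerProductSpace ℝ F] [FiniteDimensional ℝ F]
  [MeasurableSpace F] [BorelSpace F] (μ : Measure F) [μ.IsAddHaarMeasure]

lemma Convex.interior_nonempty_of_addHaar_ne_zero {s : Set F} (hs : Convex ℝ s) (h : μ s ≠ 0) :
    (interior s).Nonempty := by
  rw [hs.interior_nonempty_iff_affineSpan_eq_top]
  by_contra hspan
  exact h (measure_mono_null (subset_affineSpan ℝ s) (Measure.addHaar_affineSubspace μ _ hspan))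

lemma Convex.addHaar_closure {s : Set F} (hs : Convex ℝ s) : μ (closure s) = μ s := by
  refine le_antisymm ?_ (measure_mono subset_closure)
  calc μ (closure s) ≤ μ s + μ (frontier s) := by
        rw [closure_eq_self_union_frontier]
        exact measure_union_le _ _
    _ = μ s := by rw [hs.addHaar_frontier μ, add_zero]

theorem tendsto_addHaar_wulffShape {ι : Type*} {l : Filter ι} {h : ι → F → ℝ} {h₀ : F → ℝ}
    (hcomp : IsCompact (wulffShape h₀)) (hexact : ∀ u, ∃ w ∈ wulffShape h₀, h₀ u ≤ ⟪u, w⟫)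
    (hunif : ∀ ε > 0, ∀ᶠ i in l, ∀ u, |h i u - h₀ u| ≤ ε * ‖u‖) :
    Tendsto (fun i => μ (wulffShape (h i))) l (𝓝 (μ (wulffShape h₀))) := by
  rw [tendsto_order]
  constructor
  · intro a ha
    -- a copy of `wulffShape h₀` shrunk towards an interior point lies in `wulffShape (h i)`
    obtain ⟨c, hc⟩ := (convex_wulffShape h₀).interior_nonempty_of_addHaar_ne_zero μ
      (pos_of_gt ha).ne'
    obtain ⟨r, hr, hball⟩ := Metric.nhds_basis_closedBall.mem_iff.1 (mem_interior_iff_mem_nhds.1 hc)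
    have hscale : Tendsto (fun t : ℝ => ENNReal.ofReal |t ^ Module.finrank ℝ F| * μ (wulffShape h₀))
        (𝓝[<] 1) (𝓝 (μ (wulffShape h₀))) := by
      have hcont : Continuous fun t : ℝ => ENNReal.ofReal |t ^ Module.finrank ℝ F| :=
        ENNReal.continuous_ofReal.comp (by fun_prop)
      simpa using (ENNReal.Tendsto.mul_const (hcont.tendsto 1) (by simp)).mono_left
        (nhdsWithin_le_nhds (s := Set.Iio 1))
    obtain ⟨t, hta, ht⟩ := ((hscale.eventually_const_lt ha).and
      (Ioo_mem_nhdsLT zero_lt_one)).exists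
    filter_upwards [hunif ((1 - t) * r) (mul_pos (sub_pos.2 ht.2) hr)] with i hi
    calc a < ENNReal.ofReal |t ^ Module.finrank ℝ F| * μ (wulffShape h₀) := hta
      _ = μ (AffineMap.homothety c t '' wulffShape h₀) := (Measure.addHaar_image_homothety ..).symm
      _ ≤ μ (wulffShape (h i)) := measure_mono <|
          image_homothety_wulffShape_subset hr.le hball ht.1.le ht.2.le fun u => by
            linarith [(abs_le.1 (hi u)).1]
  · intro b hb
    obtain ⟨δ, hδb, hδ⟩ := (((tendsto_measure_cthickening_of_isCompact hcomp).mono_left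
      nhdsWithin_le_nhds).eventually_lt_const hb).and (self_mem_nhdsWithin (s := Set.Ioi 0))
      |>.exists
    filter_upwards [hunif δ hδ] with i hi
    exact (measure_mono (wulffShape_subset_cthickening hexact (le_of_lt hδ) fun u => by
      linarith [(abs_le.1 (hi u)).2])).trans_lt hδb

end Volume

section SupportFunction

variable {F : Type*} [NormedAddCommGroup F] [InnerProductSpace ℝ F] [MeasurableSpace F]

noncomputable def zonoidSupportFun (ν : Measure F) (u : F) : ℝ := ∫ x, max ⟪u, x⟫ 0 ∂ν

lemma zonoidSupportFun_smul (ν : Measure F) (u : F) {c : ℝ} (hc : 0 ≤ c) :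
    zonoidSupportFun ν (c • u) = c * zonoidSupportFun ν u := by
  simp only [zonoidSupportFun, ← integral_const_mul, real_inner_smul_left,
    mul_max_of_nonneg _ _ hc, mul_zero]

lemma zonoidSupportFun_zero (ν : Measure F) : zonoidSupportFun ν 0 = 0 := by
  simp [zonoidSupportFun]

lemma lipschitzWith_zonoidSupportFun {ν : Measure F} (hint : Integrable (fun x => x) ν) :
    LipschitzWith (∫ x, ‖x‖ ∂ν).toNNReal (zonoidSupportFun ν) := by
  refine LipschitzWith.of_dist_le' fun u v => ?_
  rw [Real.dist_eq, dist_eq_norm, zonoidSupportFun, zonoidSupportFun,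
    ← integral_sub (hint.const_inner u).pos_part (hint.const_inner v).pos_part, mul_comm,
    ← integral_const_mul]
  refine abs_integral_le_integral_abs.trans <| integral_mono_of_nonneg
    (.of_forall fun _ => abs_nonneg _) (hint.norm.const_mul _) (.of_forall fun x => ?_)
  calc |max ⟪u, x⟫ 0 - max ⟪v, x⟫ 0| ≤ |⟪u - v, x⟫| := by
        rw [inner_sub_left]
        exact abs_max_sub_max_le_abs _ _ _
    _ ≤ ‖u - v‖ * ‖x‖ := abs_real_inner_le_norm _ _

lemma zonoidSupportFun_le {ν : Measure F} (hint : Integrable (fun x => x) ν) (u : F) :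
    zonoidSupportFun ν u ≤ (∫ x, ‖x‖ ∂ν) * ‖u‖ := by
  have := (lipschitzWith_zonoidSupportFun hint).dist_le_mul u 0
  rw [Real.dist_eq, zonoidSupportFun_zero, sub_zero, dist_zero_right,
    Real.coe_toNNReal _ (integral_nonneg fun _ => norm_nonneg _)] at this
  exact (le_abs_self _).trans this

lemma isCompact_wulffShape_zonoidSupportFun [FiniteDimensional ℝ F] {ν : Measure F}
    (hint : Integrable (fun x => x) ν) : IsCompact (wulffShape (zonoidSupportFun ν)) :=
  (isCompact_closedBall 0 _).of_isClosed_subset (isClosed_wulffShape _)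
    (wulffShape_subset_closedBall (integral_nonneg fun _ => norm_nonneg _)
      (zonoidSupportFun_le hint))

variable {ι : Type*} {l : Filter ι} {νs : ι → Measure F} {ν : Measure F}

lemma eventually_abs_zonoidSupportFun_sub_le [FiniteDimensional ℝ F]
    (hint : ∀ i, Integrable (fun x => x) (νs i)) (hν : Integrable (fun x => x) ν)
    (hlim : ∀ u, Tendsto (fun i => zonoidSupportFun (νs i) u) l (𝓝 (zonoidSupportFun ν u)))
    (hnorm : Tendsto (fun i => ∫ x, ‖x‖ ∂(νs i)) l (𝓝 (∫ x, ‖x‖ ∂ν))) {ε : ℝ} (hε : 0 < ε) :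
    ∀ᶠ i in l, ∀ u, |zonoidSupportFun (νs i) u - zonoidSupportFun ν u| ≤ ε * ‖u‖ := by
  set L := ∫ x, ‖x‖ ∂ν + 1
  have hlip : ∀ᶠ i in l, LipschitzWith L.toNNReal (zonoidSupportFun (νs i)) := by
    filter_upwards [hnorm.eventually_le_const (lt_add_one _)] with i hi
    exact (lipschitzWith_zonoidSupportFun (hint i)).weaken (Real.toNNReal_le_toNNReal hi)
  have hball := eventually_forall_abs_sub_le_of_lipschitzWith (isCompact_closedBall (0 : F) 1)
    hlip ((lipschitzWith_zonoidSupportFun hν).weaken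
      (Real.toNNReal_le_toNNReal (lt_add_one _).le)) hlim hε
  filter_upwards [hball] with i hi u
  rcases eq_or_ne u 0 with rfl | hu
  · simp [zonoidSupportFun_zero]
  have hu' : ‖u‖ ≠ 0 := norm_ne_zero_iff.2 hu
  have hunit : ‖u‖⁻¹ • u ∈ Metric.closedBall (0 : F) 1 := by
    rw [mem_closedBall_zero_iff, norm_smul, norm_inv, norm_norm, inv_mul_cancel₀ hu']
  have hscale : ∀ ρ : Measure F, zonoidSupportFun ρ u = ‖u‖ * zonoidSupportFun ρ (‖u‖⁻¹ • u) :=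
    fun ρ => by rw [← zonoidSupportFun_smul _ _ (norm_nonneg u), smul_inv_smul₀ hu']
  rw [hscale, hscale ν, ← mul_sub, abs_mul, abs_norm, mul_comm ε]
  exact mul_le_mul_of_nonneg_left (hi _ hunit) (norm_nonneg u)

variable [BorelSpace F] [CompleteSpace F] [IsFiniteMeasure ν] [∀ i, IsFiniteMeasure (νs i)]

lemma tendsto_integral_of_abs_le_mul_norm
    (hweak : ∀ φ : BoundedContinuousFunction F ℝ,
      Tendsto (fun i => ∫ x, φ x ∂(νs i)) l (𝓝 (∫ x, φ x ∂ν)))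
    (hint : ∀ i, Integrable (fun x => x) (νs i)) (hν : Integrable (fun x => x) ν)
    (hmean : Tendsto (fun i => ∫ x, x ∂(νs i)) l (𝓝 (∫ x, x ∂ν)))
    (ℓ : F →L[ℝ] ℝ) (hℓs : ∀ i, ∀ᵐ x ∂(νs i), ‖x‖ ≤ ℓ x) (hℓ : ∀ᵐ x ∂ν, ‖x‖ ≤ ℓ x)
    {f : F → ℝ} (hf : Continuous f) {C : ℝ} (hC : 0 ≤ C) (hfC : ∀ x, |f x| ≤ C * ‖x‖) :
    Tendsto (fun i => ∫ x, f x ∂(νs i)) l (𝓝 (∫ x, f x ∂ν)) := by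
  have hdom : ∀ ρ : Measure F, (∀ᵐ x ∂ρ, ‖x‖ ≤ ℓ x) → ∀ᵐ x ∂ρ, |f x| ≤ C * ℓ x := fun ρ hρ => by
    filter_upwards [hρ] with x hx using (hfC x).trans (mul_le_mul_of_nonneg_left hx hC)
  have hintegral : ∀ ρ : Measure F, Integrable (fun x => x) ρ →
      ∫ x, C * ℓ x ∂ρ = C * ℓ (∫ x, x ∂ρ) := fun ρ hρ => by
    rw [integral_const_mul, ℓ.integral_comp_comm hρ]
  refine tendsto_integral_of_tendsto_integral_of_abs_le hweak hf (by fun_prop)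
    (fun i => (ℓ.integrable_comp (hint i)).const_mul C) ((ℓ.integrable_comp hν).const_mul C)
    (fun i => hdom _ (hℓs i)) (hdom _ hℓ) ?_
  simp_rw [hintegral _ (hint _), hintegral _ hν]
  exact ((ℓ.continuous.tendsto _).comp hmean).const_mul C

lemma tendsto_zonoidSupportFun
    (hweak : ∀ φ : BoundedContinuousFunction F ℝ,
      Tendsto (fun i => ∫ x, φ x ∂(νs i)) l (𝓝 (∫ x, φ x ∂ν)))
    (hint : ∀ i, Integrable (fun x => x) (νs i)) (hν : Integrable (fun x => x) ν)
    (hmean : Tendsto (fun i => ∫ x, x ∂(νs i)) l (𝓝 (∫ x, x ∂ν)))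
    (ℓ : F →L[ℝ] ℝ) (hℓs : ∀ i, ∀ᵐ x ∂(νs i), ‖x‖ ≤ ℓ x) (hℓ : ∀ᵐ x ∂ν, ‖x‖ ≤ ℓ x) (u : F) :
    Tendsto (fun i => zonoidSupportFun (νs i) u) l (𝓝 (zonoidSupportFun ν u)) :=
  tendsto_integral_of_abs_le_mul_norm hweak hint hν hmean ℓ hℓs hℓ (by fun_prop) (norm_nonneg u)
    fun x => by
      rw [abs_of_nonneg (le_max_right _ _)]
      exact max_le ((le_abs_self _).trans (abs_real_inner_le_norm u x)) (by positivity)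

lemma tendsto_integral_norm
    (hweak : ∀ φ : BoundedContinuousFunction F ℝ,
      Tendsto (fun i => ∫ x, φ x ∂(νs i)) l (𝓝 (∫ x, φ x ∂ν)))
    (hint : ∀ i, Integrable (fun x => x) (νs i)) (hν : Integrable (fun x => x) ν)
    (hmean : Tendsto (fun i => ∫ x, x ∂(νs i)) l (𝓝 (∫ x, x ∂ν)))
    (ℓ : F →L[ℝ] ℝ) (hℓs : ∀ i, ∀ᵐ x ∂(νs i), ‖x‖ ≤ ℓ x) (hℓ : ∀ᵐ x ∂ν, ‖x‖ ≤ ℓ x) :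
    Tendsto (fun i => ∫ x, ‖x‖ ∂(νs i)) l (𝓝 (∫ x, ‖x‖ ∂ν)) :=
  tendsto_integral_of_abs_le_mul_norm hweak hint hν hmean ℓ hℓs hℓ continuous_norm zero_le_one
    fun x => by rw [abs_norm, one_mul]

end SupportFunction

section Zonoid

variable {n : ℕ} {ν : Measure (EuclideanSpace ℝ (Fin n))}

lemma norm_le_one_of_mem_Icc {t : ℝ} (ht : t ∈ Set.Icc (0 : ℝ) 1) : ‖t‖ ≤ 1 :=
  (Real.norm_of_nonneg ht.1).trans_le ht.2

lemma integrable_smul_of_mem_Icc (hint : Integrable (fun x => x) ν)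
    {φ : EuclideanSpace ℝ (Fin n) → ℝ} (hφ : Measurable φ) (hφ₁ : ∀ x, φ x ∈ Set.Icc (0 : ℝ) 1) :
    Integrable (fun x => φ x • x) ν :=
  hint.bdd_smul 1 hφ.aestronglyMeasurable (.of_forall fun x => norm_le_one_of_mem_Icc (hφ₁ x))

lemma inner_integral_smul (hint : Integrable (fun x => x) ν)
    {φ : EuclideanSpace ℝ (Fin n) → ℝ} (hφ : Measurable φ) (hφ₁ : ∀ x, φ x ∈ Set.Icc (0 : ℝ) 1)
    (u : EuclideanSpace ℝ (Fin n)) : ⟪u, ∫ x, φ x • x ∂ν⟫ = ∫ x, φ x * ⟪u, x⟫ ∂ν := by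
  simp_rw [← integral_inner (integrable_smul_of_mem_Icc hint hφ hφ₁), real_inner_smul_right]

lemma zonoid_subset_wulffShape (hint : Integrable (fun x => x) ν) :
    zonoid ν ⊆ wulffShape (zonoidSupportFun ν) := by
  rintro _ ⟨φ, hφ, hφ₁, rfl⟩ u
  rw [inner_integral_smul hint hφ hφ₁, zonoidSupportFun]
  refine integral_mono ((hint.const_inner u).bdd_mul hφ.aestronglyMeasurable
      (.of_forall fun x => norm_le_one_of_mem_Icc (hφ₁ x)))
    (hint.const_inner u).pos_part fun x => ?_
  rcases le_total ⟪u, x⟫ 0 with h | h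
  · exact (mul_nonpos_of_nonneg_of_nonpos (hφ₁ x).1 h).trans (le_max_right _ _)
  · exact (mul_le_of_le_one_left h (hφ₁ x).2).trans (le_max_left _ _)

lemma exists_mem_zonoid_inner_eq (hint : Integrable (fun x => x) ν)
    (u : EuclideanSpace ℝ (Fin n)) : ∃ z ∈ zonoid ν, ⟪u, z⟫ = zonoidSupportFun ν u := by
  classical
  set φ : EuclideanSpace ℝ (Fin n) → ℝ := fun x => if 0 < ⟪u, x⟫ then 1 else 0
  have hφ : Measurable φ :=
    Measurable.ite (measurableSet_lt measurable_const (by fun_prop)) measurable_const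
      measurable_const
  have hφ₁ : ∀ x, φ x ∈ Set.Icc (0 : ℝ) 1 := fun x => by
    simp only [φ]
    split_ifs <;> norm_num
  refine ⟨_, ⟨φ, hφ, hφ₁, rfl⟩, ?_⟩
  rw [inner_integral_smul hint hφ hφ₁, zonoidSupportFun]
  congr 1 with x
  simp only [φ]
  split_ifs with h
  · rw [one_mul, max_eq_left h.le]
  · rw [zero_mul, max_eq_right (not_lt.1 h)]

lemma convex_zonoid (hint : Integrable (fun x => x) ν) : Convex ℝ (zonoid ν) := by
  rintro _ ⟨φ₁, hφ₁, h₁, rfl⟩ _ ⟨φ₂, hφ₂, h₂, rfl⟩ a b ha hb hab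
  refine ⟨fun x => a * φ₁ x + b * φ₂ x, by fun_prop, fun x => ⟨?_, ?_⟩, ?_⟩
  · exact add_nonneg (mul_nonneg ha (h₁ x).1) (mul_nonneg hb (h₂ x).1)
  · nlinarith [(h₁ x).2, (h₂ x).2]
  · simp_rw [add_smul, mul_smul]
    rw [← integral_smul, ← integral_smul, ← integral_add]
    · exact (integrable_smul_of_mem_Icc hint hφ₁ h₁).smul a
    · exact (integrable_smul_of_mem_Icc hint hφ₂ h₂).smul b

lemma closure_zonoid (hint : Integrable (fun x => x) ν) :
    closure (zonoid ν) = wulffShape (zonoidSupportFun ν) := by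
  refine subset_antisymm
    (closure_minimal (zonoid_subset_wulffShape hint) (isClosed_wulffShape _)) fun z hz => ?_
  by_contra hzc
  obtain ⟨f, c, hf, hfz⟩ :=
    geometric_hahn_banach_closed_point (convex_zonoid hint).closure isClosed_closure hzc
  set v := (InnerProductSpace.toDual ℝ _).symm f
  obtain ⟨w, hw, hvw⟩ := exists_mem_zonoid_inner_eq hint v
  have hfw := hf w (subset_closure hw)
  have hvz := hz v
  rw [InnerProductSpace.toDual_symm_apply] at hvw hvz
  linarith

lemma volume_zonoid (hint : Integrable (fun x => x) ν) :
    volume (zonoid ν) = volume (wulffShape (zonoidSupportFun ν)) := by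
  rw [← closure_zonoid hint, (convex_zonoid hint).addHaar_closure volume]

lemma volume_zonoid_ne_top (hint : Integrable (fun x => x) ν) : volume (zonoid ν) ≠ ⊤ := by
  rw [volume_zonoid hint]
  exact (isCompact_wulffShape_zonoidSupportFun hint).measure_lt_top.ne

lemma tendsto_volume_zonoid {ι : Type*} {l : Filter ι} {νs : ι → Measure (EuclideanSpace ℝ (Fin n))}
    (hint : ∀ i, Integrable (fun x => x) (νs i)) (hν : Integrable (fun x => x) ν)
    (hlim : ∀ u, Tendsto (fun i => zonoidSupportFun (νs i) u) l (𝓝 (zonoidSupportFun ν u)))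
    (hnorm : Tendsto (fun i => ∫ x, ‖x‖ ∂(νs i)) l (𝓝 (∫ x, ‖x‖ ∂ν))) :
    Tendsto (fun i => volume (zonoid (νs i))) l (𝓝 (volume (zonoid ν))) := by
  simp_rw [volume_zonoid (hint _), volume_zonoid hν]
  refine tendsto_addHaar_wulffShape volume (isCompact_wulffShape_zonoidSupportFun hν)
    (fun u => ?_) fun ε hε => eventually_abs_zonoidSupportFun_sub_le hint hν hlim hnorm hε
  obtain ⟨w, hw, hwu⟩ := exists_mem_zonoid_inner_eq hν u
  exact ⟨w, zonoid_subset_wulffShape hν hw, hwu.ge⟩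

end Zonoid

section Octant

variable {n : ℕ}

lemma norm_le_sum_of_mem_octant {x : EuclideanSpace ℝ (Fin n)} (hx : x ∈ octant n) :
    ‖x‖ ≤ ∑ i, x i := by
  rw [EuclideanSpace.norm_eq, ← abs_of_nonneg (Finset.sum_nonneg fun i _ => hx i),
    ← Real.sqrt_sq_eq_abs]
  refine Real.sqrt_le_sqrt ?_
  simp_rw [Real.norm_eq_abs, sq_abs]
  exact Finset.sum_sq_le_sq_sum_of_nonneg fun i _ => hx i

lemma ae_norm_le_sum_proj {ν : Measure (EuclideanSpace ℝ (Fin n))} (hν : ν (octant n)ᶜ = 0) :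
    ∀ᵐ x ∂ν, ‖x‖ ≤ (∑ i, EuclideanSpace.proj i : EuclideanSpace ℝ (Fin n) →L[ℝ] ℝ) x := by
  filter_upwards [mem_ae_iff.2 hν] with x hx
  simpa using norm_le_sum_of_mem_octant hx

end Octant

section Parbox

variable {n : ℕ}

lemma volume_parbox (v : EuclideanSpace ℝ (Fin n)) :
    volume (parbox v) = ∏ i, ENNReal.ofReal (v i) := by
  have hpre : (MeasurableEquiv.toLp 2 (Fin n → ℝ)).symm ⁻¹'
      (Set.univ.pi fun i => Set.Icc 0 (v i)) = parbox v := by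
    ext x
    simp only [Set.mem_preimage, Set.mem_univ_pi, Set.mem_Icc, parbox]
    rfl
  rw [← hpre, (EuclideanSpace.volume_preserving_symm_measurableEquiv_toLp (Fin n)).measure_preimage
    (MeasurableSet.univ_pi fun i => measurableSet_Icc).nullMeasurableSet, volume_pi_pi]
  simp_rw [Real.volume_Icc, sub_zero]

lemma volume_parbox_ne_top (v : EuclideanSpace ℝ (Fin n)) : volume (parbox v) ≠ ⊤ := by
  rw [volume_parbox]
  exact (ENNReal.prod_lt_top fun i _ => ENNReal.ofReal_lt_top).ne

lemma volume_parbox_toReal (v : EuclideanSpace ℝ (Fin n)) :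
    (volume (parbox v)).toReal = ∏ i, max (v i) 0 := by
  simp_rw [volume_parbox, ENNReal.toReal_prod, ENNReal.toReal_ofReal']

lemma continuous_volume_parbox_toReal :
    Continuous fun v : EuclideanSpace ℝ (Fin n) => (volume (parbox v)).toReal := by
  simp_rw [volume_parbox_toReal]
  fun_prop

end Parbox

theorem gini_extended_general {m : ℕ}
    (μk : ℕ → Measure (EuclideanSpace ℝ (Fin (m + 1))))
    (μ : Measure (EuclideanSpace ℝ (Fin (m + 1))))
    [∀ k, IsProbabilityMeasure (μk k)] [IsProbabilityMeasure μ]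
    (hint : ∀ k, Integrable (fun x => x) (μk k)) (hμint : Integrable (fun x => x) μ)
    (hsupp : ∀ k, μk k (octant (m + 1))ᶜ = 0) (hsuppμ : μ (octant (m + 1))ᶜ = 0)
    (hP : volume (parbox (∫ x, x ∂μ)) ≠ 0)
    (hweak : ∀ f : BoundedContinuousFunction (EuclideanSpace ℝ (Fin (m + 1))) ℝ,
      Tendsto (fun k => ∫ x, f x ∂(μk k)) atTop (𝓝 (∫ x, f x ∂μ)))
    (hmean : Tendsto (fun k => ∫ x, x ∂(μk k)) atTop (𝓝 (∫ x, x ∂μ))) :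
    Tendsto (fun k =>
        (volume (zonoid (μk k))).toReal / (volume (parbox (∫ x, x ∂(μk k)))).toReal)
      atTop (𝓝 ((volume (zonoid μ)).toReal / (volume (parbox (∫ x, x ∂μ))).toReal)) := by
  have hℓs := fun k => ae_norm_le_sum_proj (hsupp k)
  have hℓ := ae_norm_le_sum_proj hsuppμ
  have hvol := tendsto_volume_zonoid hint hμint
    (tendsto_zonoidSupportFun hweak hint hμint hmean _ hℓs hℓ)
    (tendsto_integral_norm hweak hint hμint hmean _ hℓs hℓ)
  have hbox := (continuous_volume_parbox_toReal.tendsto _).comp hmean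
  exact ((ENNReal.tendsto_toReal (volume_zonoid_ne_top hμint)).comp hvol).div hbox
    (ENNReal.toReal_ne_zero.2 ⟨hP, volume_parbox_ne_top _⟩)

theorem gini_extended {m : ℕ}
    (μk : ℕ → Measure (EuclideanSpace ℝ (Fin (m + 1))))
    (μ : Measure (EuclideanSpace ℝ (Fin (m + 1))))
    [∀ k, IsProbabilityMeasure (μk k)] [IsProbabilityMeasure μ]
    (hint : ∀ k, Integrable (fun x => x) (μk k)) (hμint : Integrable (fun x => x) μ)
    (hsupp : ∀ k, μk k (octant (m + 1))ᶜ = 0) (hsuppμ : μ (octant (m + 1))ᶜ = 0)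
    (hPk : ∀ k, volume (parbox (∫ x, x ∂(μk k))) ≠ 0)
    (hP : volume (parbox (∫ x, x ∂μ)) ≠ 0)
    (hweak : ∀ f : BoundedContinuousFunction (EuclideanSpace ℝ (Fin (m + 1))) ℝ,
      Tendsto (fun k => ∫ x, f x ∂(μk k)) atTop (𝓝 (∫ x, f x ∂μ)))
    (hmean : Tendsto (fun k => ∫ x, x ∂(μk k)) atTop (𝓝 (∫ x, x ∂μ))) :
    Tendsto (fun k =>
        (volume (zonoid (μk k))).toReal / (volume (parbox (∫ x, x ∂(μk k)))).toReal)
      atTop (𝓝 ((volume (zonoid μ)).toReal / (volume (parbox (∫ x, x ∂μ))).toReal)) :=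
  gini_extended_general μk μ hint hμint hsupp hsuppμ hP hweak hmean
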